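/- arXiv:1307.3342 — 6 statements merged into one kernel-verified Lean document; each statement's English description precedes it below -/
import Mathlib

section
/- Let X, Y be complex Banach spaces, A ∈ B(X), B ∈ B(Y). If A is quasi-nilpotent but not nilpotent and B is not nilpotent, then the multiplication operator τ_{AB}(U) = AUB on B(Y,X) is quasi-nilpotent but not nilpotent. -/
/-!
Induction gives `τⁿ U = Aⁿ U Bⁿ`. Hence `‖τⁿ‖ ≤ ‖Aⁿ‖ ‖B‖ⁿ`, and Gelfand's formula bounds the
spectral radius of `τ` by `r(A) ‖B‖ = 0`. If `τⁿ = 0`, pick `x` with `Aⁿ x ≠ 0` and `y` with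
`Bⁿ y ≠ 0`, and a functional `g` with `g (Bⁿ y) ≠ 0` (Hahn–Banach); the rank-one operator
`U = g(·) x` then has `τⁿ U y = g (Bⁿ y) Aⁿ x ≠ 0`.
-/

open Filter ENNReal

namespace spectrum

variable {A : Type*} [NormedRing A] [NormedAlgebra ℂ A] [CompleteSpace A]

theorem spectralRadius_eq_zero_iff [Nontrivial A] {a : A} :
    spectralRadius ℂ a = 0 ↔ spectrum ℂ a = {0} := by
  refine ⟨fun h => ?_, fun h => by simp [spectralRadius, h]⟩
  refine Set.eq_singleton_iff_nonempty_unique_mem.mpr ⟨spectrum.nonempty a, fun z hz => ?_⟩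
  have hz_le : (‖z‖₊ : ℝ≥0∞) ≤ 0 := h ▸ le_iSup₂ (α := ℝ≥0∞) z hz
  simpa using hz_le

theorem spectralRadius_le_spectralRadius_mul_of_nnnorm_pow_le {𝕜 B : Type*} [NormedField 𝕜]
    [NormedRing B] [NormedAlgebra 𝕜 B] [CompleteSpace B] {b : B} {a : A} {c : NNReal}
    (h : ∀ n : ℕ, 0 < n → ‖b ^ n‖₊ ≤ ‖a ^ n‖₊ * c ^ n) :
    spectralRadius 𝕜 b ≤ spectralRadius ℂ a * c := by
  have hroot : ∀ᶠ n : ℕ in atTop,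
      (‖b ^ n‖₊ : ℝ≥0∞) ^ (1 / n : ℝ) ≤ (‖a ^ n‖₊ : ℝ≥0∞) ^ (1 / n : ℝ) * c := by
    filter_upwards [eventually_gt_atTop 0] with n hn
    have hn' : (n : ℝ) ≠ 0 := Nat.cast_ne_zero.mpr hn.ne'
    calc (‖b ^ n‖₊ : ℝ≥0∞) ^ (1 / n : ℝ)
        ≤ ((‖a ^ n‖₊ : ℝ≥0∞) * (c : ℝ≥0∞) ^ n) ^ (1 / n : ℝ) :=
          ENNReal.rpow_le_rpow (mod_cast h n hn) (by positivity)
      _ = (‖a ^ n‖₊ : ℝ≥0∞) ^ (1 / n : ℝ) * c := by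
          rw [ENNReal.mul_rpow_of_nonneg _ _ (by positivity), ← ENNReal.rpow_natCast,
            ← ENNReal.rpow_mul, mul_one_div, div_self hn', ENNReal.rpow_one]
  calc spectralRadius 𝕜 b
      ≤ atTop.liminf fun n : ℕ => (‖b ^ n‖₊ : ℝ≥0∞) ^ (1 / n : ℝ) :=
        spectralRadius_le_liminf_pow_nnnorm_pow_one_div 𝕜 b
    _ ≤ atTop.liminf fun n : ℕ => (‖a ^ n‖₊ : ℝ≥0∞) ^ (1 / n : ℝ) * c :=
        liminf_le_liminf hroot
    _ = spectralRadius ℂ a * c :=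
        (ENNReal.Tendsto.mul_const (pow_nnnorm_pow_one_div_tendsto_nhds_spectralRadius a)
          (Or.inr coe_ne_top)).liminf_eq

end spectrum

namespace ContinuousLinearMap

section NontriviallyNormedField

variable {𝕜 X Y : Type*} [NontriviallyNormedField 𝕜]
  [NormedAddCommGroup X] [NormedSpace 𝕜 X] [NormedAddCommGroup Y] [NormedSpace 𝕜 Y]
  {A : X →L[𝕜] X} {B : Y →L[𝕜] Y} {T : (Y →L[𝕜] X) →L[𝕜] (Y →L[𝕜] X)}

theorem pow_apply_of_forall_apply_eq_comp_comp (hT : ∀ U, T U = A.comp (U.comp B)) (n : ℕ)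
    (U : Y →L[𝕜] X) : (T ^ n) U = (A ^ n).comp (U.comp (B ^ n)) := by
  induction n with
  | zero => rfl
  | succ n ih =>
    rw [pow_succ', mul_apply_eq_comp, ih, hT, pow_succ', pow_succ]
    rfl

theorem nnnorm_pow_le_of_forall_apply_eq_comp_comp (hT : ∀ U, T U = A.comp (U.comp B))
    (n : ℕ) (hn : 0 < n) : ‖T ^ n‖₊ ≤ ‖A ^ n‖₊ * ‖B‖₊ ^ n := by
  refine opNNNorm_le_bound _ _ fun U => ?_
  rw [pow_apply_of_forall_apply_eq_comp_comp hT]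
  calc ‖(A ^ n).comp (U.comp (B ^ n))‖₊ ≤ ‖A ^ n‖₊ * (‖U‖₊ * ‖B ^ n‖₊) :=
        (opNNNorm_comp_le _ _).trans (by gcongr; exact opNNNorm_comp_le _ _)
    _ ≤ ‖A ^ n‖₊ * (‖U‖₊ * ‖B‖₊ ^ n) := by gcongr; exact nnnorm_pow_le' _ hn
    _ = ‖A ^ n‖₊ * ‖B‖₊ ^ n * ‖U‖₊ := by ring

end NontriviallyNormedField

section RCLike

variable {𝕜 X Y : Type*} [RCLike 𝕜]
  [NormedAddCommGroup X] [NormedSpace 𝕜 X] [NormedAddCommGroup Y] [NormedSpace 𝕜 Y]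

theorem exists_comp_comp_ne_zero {X' Y' : Type*} [NormedAddCommGroup X'] [NormedSpace 𝕜 X']
    [NormedAddCommGroup Y'] [NormedSpace 𝕜 Y'] {P : X →L[𝕜] X'} {Q : Y' →L[𝕜] Y}
    (hP : P ≠ 0) (hQ : Q ≠ 0) : ∃ U : Y →L[𝕜] X, P.comp (U.comp Q) ≠ 0 := by
  obtain ⟨x, hx⟩ : ∃ x, P x ≠ 0 := by simpa [ContinuousLinearMap.ext_iff] using hP
  obtain ⟨y, hy⟩ : ∃ y, Q y ≠ 0 := by simpa [ContinuousLinearMap.ext_iff] using hQ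
  obtain ⟨g, -, hg⟩ := exists_dual_vector 𝕜 (Q y) (norm_ne_zero_iff.mpr hy)
  refine ⟨g.smulRight x, fun h => ?_⟩
  have hy' : P (g (Q y) • x) = 0 := congrArg (· y) h
  rw [hg, map_smul, smul_eq_zero] at hy'
  exact hy'.elim (by simpa using hy) hx

theorem not_isNilpotent_of_forall_apply_eq_comp_comp {A : X →L[𝕜] X} {B : Y →L[𝕜] Y}
    {T : (Y →L[𝕜] X) →L[𝕜] (Y →L[𝕜] X)} (hT : ∀ U, T U = A.comp (U.comp B))
    (hA : ¬ IsNilpotent A) (hB : ¬ IsNilpotent B) : ¬ IsNilpotent T := by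
  rintro ⟨n, hn⟩
  obtain ⟨U, hU⟩ := exists_comp_comp_ne_zero (fun h => hA ⟨n, h⟩) (fun h => hB ⟨n, h⟩)
  exact hU (by rw [← pow_apply_of_forall_apply_eq_comp_comp hT, hn, zero_apply])

end RCLike

theorem spectralRadius_le_of_forall_apply_eq_comp_comp {X Y : Type*} [NormedAddCommGroup X]
    [NormedSpace ℂ X] [CompleteSpace X] [NormedAddCommGroup Y] [NormedSpace ℂ Y]
    {A : X →L[ℂ] X} {B : Y →L[ℂ] Y} {T : (Y →L[ℂ] X) →L[ℂ] (Y →L[ℂ] X)}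
    (hT : ∀ U, T U = A.comp (U.comp B)) : spectralRadius ℂ T ≤ spectralRadius ℂ A * ‖B‖₊ :=
  -- Without the carrier types, unifying the two operator-algebra instance paths times out.
  spectrum.spectralRadius_le_spectralRadius_mul_of_nnnorm_pow_le (𝕜 := ℂ)
    (B := (Y →L[ℂ] X) →L[ℂ] (Y →L[ℂ] X)) (A := X →L[ℂ] X)
    (nnnorm_pow_le_of_forall_apply_eq_comp_comp hT)

end ContinuousLinearMap

theorem tau_quasinilpotent_not_nilpotent_general
    {X Y : Type*} [NormedAddCommGroup X] [NormedSpace ℂ X] [CompleteSpace X]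
    [NormedAddCommGroup Y] [NormedSpace ℂ Y]
    (A : X →L[ℂ] X) (B : Y →L[ℂ] Y)
    (T : (Y →L[ℂ] X) →L[ℂ] (Y →L[ℂ] X))
    (hT : ∀ U : Y →L[ℂ] X, T U = A.comp (U.comp B))
    (hAq : spectrum ℂ A = {0}) (hA : ¬ IsNilpotent A) (hB : ¬ IsNilpotent B) :
    spectrum ℂ T = {0} ∧ ¬ IsNilpotent T := by
  have hT_nil : ¬ IsNilpotent T :=
    ContinuousLinearMap.not_isNilpotent_of_forall_apply_eq_comp_comp hT hA hB
  have hρT := ContinuousLinearMap.spectralRadius_le_of_forall_apply_eq_comp_comp hT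
  have : Nontrivial (X →L[ℂ] X) := nontrivial_of_ne A 0 (by rintro rfl; exact hA .zero)
  have : Nontrivial ((Y →L[ℂ] X) →L[ℂ] (Y →L[ℂ] X)) :=
    nontrivial_of_ne T 0 (by rintro rfl; exact hT_nil .zero)
  rw [(spectrum.spectralRadius_eq_zero_iff (A := X →L[ℂ] X)).mpr hAq, zero_mul,
    nonpos_iff_eq_zero,
    spectrum.spectralRadius_eq_zero_iff (A := (Y →L[ℂ] X) →L[ℂ] (Y →L[ℂ] X))] at hρT
  exact ⟨hρT, hT_nil⟩

/-- If `A` is quasi-nilpotent but not nilpotent and `B` is not nilpotent, then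
`τ_{AB} : U ↦ A U B` is quasi-nilpotent but not nilpotent. -/
theorem tau_quasinilpotent_not_nilpotent
    {X Y : Type*} [NormedAddCommGroup X] [NormedSpace ℂ X] [CompleteSpace X]
    [NormedAddCommGroup Y] [NormedSpace ℂ Y] [CompleteSpace Y]
    (A : X →L[ℂ] X) (B : Y →L[ℂ] Y)
    (T : (Y →L[ℂ] X) →L[ℂ] (Y →L[ℂ] X))
    (hT : ∀ U : Y →L[ℂ] X, T U = A.comp (U.comp B))
    (hAq : spectrum ℂ A = {0}) (hA : ¬ IsNilpotent A) (hB : ¬ IsNilpotent B) :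
    spectrum ℂ T = {0} ∧ ¬ IsNilpotent T :=
  tau_quasinilpotent_not_nilpotent_general A B T hT hAq hA hB
end

section
/- Let X, Y be complex Banach spaces, A ∈ B(X), B ∈ B(Y). If A is Drazin invertible and B is invertible, then the multiplication operator τ_{AB}(U) = AUB on B(Y,X) is Drazin invertible. -/
/-- An operator `T` is Drazin invertible if there exist `S` and `m` with
`T^m = T^m S T`, `S T S = S`, `T S = S T`. -/
def IsDrazinInvertible {R : Type*} [Monoid R] (T : R) : Prop :=
  ∃ (S : R) (m : ℕ), T ^ m = T ^ m * S * T ∧ S * T * S = S ∧ T * S = S * T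

/-- If `A` is Drazin invertible and `B` is invertible, then `τ_{AB} : U ↦ A U B`
is Drazin invertible. -/
theorem tau_drazin_of_drazin_of_invertible
    {X Y : Type*} [NormedAddCommGroup X] [NormedSpace ℂ X] [CompleteSpace X]
    [NormedAddCommGroup Y] [NormedSpace ℂ Y] [CompleteSpace Y]
    (A : X →L[ℂ] X) (B : Y →L[ℂ] Y)
    (T : (Y →L[ℂ] X) →L[ℂ] (Y →L[ℂ] X))
    (hT : ∀ U : Y →L[ℂ] X, T U = A.comp (U.comp B))
    (hA : IsDrazinInvertible A) (hB : IsUnit B) :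
    IsDrazinInvertible T := by
  obtain ⟨S, m, h1, h2, h3⟩ := hA
  obtain ⟨u, hu⟩ := hB
  set C : Y →L[ℂ] Y := ((u⁻¹ : (Y →L[ℂ] Y)ˣ) : Y →L[ℂ] Y) with hC
  have hCB : ∀ y, C (B y) = y := by
    intro y
    have h := u.inv_mul
    have := ContinuousLinearMap.ext_iff.mp h y
    simpa [hu, ContinuousLinearMap.mul_apply] using this
  have hBC : ∀ y, B (C y) = y := by
    intro y
    have h := u.mul_inv
    have := ContinuousLinearMap.ext_iff.mp h y
    simpa [hu, ContinuousLinearMap.mul_apply] using this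
  set S' : (Y →L[ℂ] X) →L[ℂ] (Y →L[ℂ] X) :=
    ((ContinuousLinearMap.compL ℂ Y X X) S).comp
      (((ContinuousLinearMap.compL ℂ Y Y X).flip) C) with hS'def
  have hS' : ∀ (U : Y →L[ℂ] X) (y : Y), S' U y = S (U (C y)) := fun U y => rfl
  have hpow : ∀ (n : ℕ) (U : Y →L[ℂ] X) (y : Y),
      (T ^ n) U y = (A ^ n) (U ((B ^ n) y)) := by
    intro n
    induction n with
    | zero => intro U y; simp
    | succ n ih =>
      intro U y
      have e1 : (T ^ (n + 1)) U y = (T ^ n) (T U) y := by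
        rw [pow_succ]; rfl
      rw [e1, ih, hT]
      have e2 : (A ^ (n + 1)) (U ((B ^ (n + 1)) y))
          = (A ^ n) (A (U (B ((B ^ n) y)))) := by
        rw [pow_succ, pow_succ']; rfl
      rw [e2]; rfl
  refine ⟨S', m, ?_, ?_, ?_⟩
  · ext U y
    have lhs : (T ^ m) U y = (A ^ m) (U ((B ^ m) y)) := hpow m U y
    have rhs : ((T ^ m * S' * T) U) y = (A ^ m) (S (A (U ((B ^ m) y)))) := by
      have : ((T ^ m * S' * T) U) y = (T ^ m) (S' (T U)) y := rfl
      rw [this, hpow, hS', hT]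
      simp [hBC]
    rw [lhs, rhs]
    exact ContinuousLinearMap.ext_iff.mp h1 (U ((B ^ m) y))
  · ext U y
    have lhs : ((S' * T * S') U) y = S (A (S (U (C y)))) := by
      have : ((S' * T * S') U) y = S' (T (S' U)) y := rfl
      rw [this, hS', hT]
      simp [hS', hBC]
    rw [lhs, hS']
    exact ContinuousLinearMap.ext_iff.mp h2 (U (C y))
  · ext U y
    have lhs : ((T * S') U) y = A (S (U y)) := by
      have : ((T * S') U) y = T (S' U) y := rfl
      rw [this, hT]
      simp [hS', hCB]
    have rhs : ((S' * T) U) y = S (A (U y)) := by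
      have : ((S' * T) U) y = S' (T U) y := rfl
      rw [this, hS', hT]
      simp [hBC]
    rw [lhs, rhs]
    exact ContinuousLinearMap.ext_iff.mp h3 (U y)
end

section
/- Let X, Y be complex Banach spaces, A ∈ B(X), B ∈ B(Y). If A and B are both Drazin invertible, then the multiplication operator τ_{AB}(U) = AUB on B(Y,X) is Drazin invertible. -/
/-- If `A` and `B` are Drazin invertible, then `τ_{AB} : U ↦ A U B` is Drazin invertible. -/
theorem tau_drazin_of_drazin
    {X Y : Type*} [NormedAddCommGroup X] [NormedSpace ℂ X] [CompleteSpace X]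
    [NormedAddCommGroup Y] [NormedSpace ℂ Y] [CompleteSpace Y]
    (A : X →L[ℂ] X) (B : Y →L[ℂ] Y)
    (T : (Y →L[ℂ] X) →L[ℂ] (Y →L[ℂ] X))
    (hT : ∀ U : Y →L[ℂ] X, T U = A.comp (U.comp B))
    (hA : IsDrazinInvertible A) (hB : IsDrazinInvertible B) :
    IsDrazinInvertible T := by
  obtain ⟨SA, m, hA1, hA2, hA3⟩ := hA
  obtain ⟨SB, n, hB1, hB2, hB3⟩ := hB
  set S : (Y →L[ℂ] X) →L[ℂ] (Y →L[ℂ] X) :=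
    ((ContinuousLinearMap.compL ℂ Y X X) SA).comp
      (((ContinuousLinearMap.compL ℂ Y Y X).flip) SB) with hSdef
  have hS : ∀ U : Y →L[ℂ] X, S U = SA.comp (U.comp SB) := by
    intro U; rfl
  -- powers of T act as powers of A and B
  have hTk : ∀ (k : ℕ) (U : Y →L[ℂ] X), (T ^ k) U = (A ^ k).comp (U.comp (B ^ k)) := by
    intro k
    induction k with
    | zero => intro U; ext y; simp
    | succ k ih =>
      intro U
      have hstep : (T ^ (k + 1)) U = (T ^ k) (T U) := by
        rw [pow_succ, ContinuousLinearMap.mul_apply]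
      have hAc : ∀ x : X, (A ^ k) (A x) = A ((A ^ k) x) := by
        intro x
        have h := DFunLike.congr_fun ((Commute.refl A).pow_right k) x
        simpa [ContinuousLinearMap.mul_apply] using h.symm
      have hBc : ∀ y : Y, (B ^ k) (B y) = B ((B ^ k) y) := by
        intro y
        have h := DFunLike.congr_fun ((Commute.refl B).pow_right k) y
        simpa [ContinuousLinearMap.mul_apply] using h.symm
      rw [hstep, hT, ih]
      ext y
      simp [pow_succ, ContinuousLinearMap.comp_apply, ContinuousLinearMap.mul_apply, hAc, hBc]
  -- key algebraic facts
  have hA' : A ^ (m + n) * SA * A = A ^ (m + n) := by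
    have : A ^ (m + n) = A ^ n * A ^ m := by rw [← pow_add, Nat.add_comm]
    rw [this, mul_assoc, mul_assoc, ← mul_assoc (A ^ m), ← hA1]
  have hBn : B * SB * B ^ n = B ^ n := by
    have hc : SB * B ^ n = B ^ n * SB := by
      have : Commute B SB := hB3
      exact (this.pow_left n).symm
    calc B * SB * B ^ n = B * (B ^ n * SB) := by rw [mul_assoc, hc]
      _ = B ^ n * (SB * B) := by
          rw [← mul_assoc, ← pow_succ', pow_succ, mul_assoc, ← hB3]
      _ = B ^ n * SB * B := by rw [mul_assoc]
      _ = B ^ n := hB1.symm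
  have hB' : B * SB * B ^ (m + n) = B ^ (m + n) := by
    have : B ^ (m + n) = B ^ n * B ^ m := by rw [← pow_add, Nat.add_comm]
    rw [this, ← mul_assoc, mul_assoc B SB, ← mul_assoc B, hBn]
  -- pointwise versions
  have hA'' : ∀ x : X, (A ^ (m + n)) (SA (A x)) = (A ^ (m + n)) x := by
    intro x
    have := DFunLike.congr_fun hA' x
    simpa [ContinuousLinearMap.mul_apply] using this
  have hB'' : ∀ y : Y, B (SB ((B ^ (m + n)) y)) = (B ^ (m + n)) y := by
    intro y
    have := DFunLike.congr_fun hB' y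
    simpa [ContinuousLinearMap.mul_apply] using this
  have hSAS : ∀ x : X, SA (A (SA x)) = SA x := by
    intro x
    have := DFunLike.congr_fun hA2 x
    simpa [ContinuousLinearMap.mul_apply] using this
  have hSBS : ∀ y : Y, SB (B (SB y)) = SB y := by
    intro y
    have := DFunLike.congr_fun hB2 y
    simpa [ContinuousLinearMap.mul_apply] using this
  have hASA : ∀ x : X, A (SA x) = SA (A x) := by
    intro x
    have := DFunLike.congr_fun hA3 x
    simpa [ContinuousLinearMap.mul_apply] using this
  have hBSB : ∀ y : Y, B (SB y) = SB (B y) := by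
    intro y
    have := DFunLike.congr_fun hB3 y
    simpa [ContinuousLinearMap.mul_apply] using this
  refine ⟨S, m + n, ?_, ?_, ?_⟩
  · ext U y
    simp only [ContinuousLinearMap.mul_apply, hT, hS, hTk, ContinuousLinearMap.comp_apply]
    rw [hB'', hA'']
  · ext U y
    simp only [ContinuousLinearMap.mul_apply, hT, hS, ContinuousLinearMap.comp_apply]
    rw [hSBS, hSAS]
  · ext U y
    simp only [ContinuousLinearMap.mul_apply, hT, hS, ContinuousLinearMap.comp_apply]
    rw [hASA, hBSB]
end

section
/- Let X be a complex Banach space, A ∈ B(X), and λ ∈ σ(A). Suppose X = M ⊕ N is a direct sum of nonzero closed A-invariant subspaces such that (A − λ)|_M is quasi-nilpotent but not nilpotent and (A − λ)|_N is invertible. Then λ is an isolated point of σ(A) that is not a pole of A. -/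
/-!
Away from `λ`, the operator `A - μ` is the direct sum of `A₁ - μ` and `A₂ - μ`, so it is invertible
as soon as both summands are. Since `σ(A₁) = {λ}` and `σ(A₂)` is a closed set missing `λ`, the
complement of `σ(A₂)` is a neighbourhood of `λ` meeting `σ(A)` only in `λ`.

If `λ` were a pole, `T = (A - λ)|_M` would inherit finite ascent and descent (for the descent one
needs the invariant complement `N`). For `p` beyond both, `T` induces a bijective, hence invertible,
operator on the Banach space `M ⧸ ker Tᵖ`. Resolvents of `T` commute with `Tᵖ`, so they descend to
the quotient and its spectrum lies in `σ(T) = {0}`; it is therefore empty, which forces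
`M ⧸ ker Tᵖ = 0`, i.e. `Tᵖ = 0`.
-/

open LinearMap Function

namespace Module.End

variable {R M : Type*} [Ring R] [AddCommGroup M] [Module R M]

def HasFiniteAscent (f : End R M) : Prop :=
  ∃ n, ker (f ^ n) = ker (f ^ (n + 1))

def HasFiniteDescent (f : End R M) : Prop :=
  ∃ n, range (f ^ n) = range (f ^ (n + 1))

variable {f : End R M}

theorem ker_pow_succ_eq_of_le {n k : ℕ} (h : ker (f ^ n) = ker (f ^ (n + 1))) (hk : n ≤ k) :
    ker (f ^ k) = ker (f ^ (k + 1)) := by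
  induction k, hk using Nat.le_induction with
  | base => exact h
  | succ k _ ih =>
    rw [pow_succ f k, pow_succ f (k + 1), mul_eq_comp, mul_eq_comp, ker_comp, ker_comp, ih]

theorem range_pow_succ_eq_of_le {n k : ℕ} (h : range (f ^ n) = range (f ^ (n + 1)))
    (hk : n ≤ k) : range (f ^ k) = range (f ^ (k + 1)) := by
  induction k, hk using Nat.le_induction with
  | base => exact h
  | succ k _ ih =>
    rw [pow_succ' f k, pow_succ' f (k + 1), mul_eq_comp, mul_eq_comp, range_comp, range_comp, ih]

theorem exists_ker_pow_eq_and_range_pow_eq (ha : f.HasFiniteAscent) (hd : f.HasFiniteDescent) :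
    ∃ p, ker (f ^ p) = ker (f ^ (p + 1)) ∧ range (f ^ p) = range (f ^ (p + 1)) :=
  let ⟨n, hn⟩ := ha
  let ⟨m, hm⟩ := hd
  ⟨max n m, ker_pow_succ_eq_of_le hn (le_max_left n m),
    range_pow_succ_eq_of_le hm (le_max_right n m)⟩

section Restriction

variable {p q : Submodule R M} {f₁ : End R p}

theorem coe_pow_apply_of_coe_apply (hf₁ : ∀ x : p, (f₁ x : M) = f x) (n : ℕ) (x : p) :
    ((f₁ ^ n) x : M) = (f ^ n) x := by
  induction n generalizing x with
  | zero => rfl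
  | succ n ih => rw [pow_succ, mul_apply, ih, hf₁, pow_succ, mul_apply]

theorem ker_pow_eq_comap_of_coe_apply (hf₁ : ∀ x : p, (f₁ x : M) = f x) (n : ℕ) :
    ker (f₁ ^ n) = (ker (f ^ n)).comap p.subtype := by
  ext x
  simp [← coe_pow_apply_of_coe_apply hf₁]

theorem range_pow_eq_comap_of_isCompl (hpq : IsCompl p q) (hf₁ : ∀ x : p, (f₁ x : M) = f x)
    (hfq : ∀ y ∈ q, f y ∈ q) (n : ℕ) :
    range (f₁ ^ n) = (range (f ^ n)).comap p.subtype := by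
  ext x
  simp only [mem_range, Submodule.mem_comap, Submodule.subtype_apply]
  constructor
  · rintro ⟨y, rfl⟩
    exact ⟨y, (coe_pow_apply_of_coe_apply hf₁ n y).symm⟩
  · rintro ⟨z, hz⟩
    obtain ⟨y, hy, w, hw, rfl⟩ :=
      Submodule.mem_sup.mp (hpq.sup_eq_top ▸ Submodule.mem_top (x := z))
    have hfy : (f ^ n) y = (f₁ ^ n) ⟨y, hy⟩ := (coe_pow_apply_of_coe_apply hf₁ n ⟨y, hy⟩).symm
    have hfw : (f ^ n) w = 0 := by
      refine Submodule.disjoint_def.mp hpq.disjoint _ ?_ (pow_apply_mem_of_forall_mem n hfq w hw)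
      rw [← add_sub_cancel_left ((f ^ n) y) ((f ^ n) w), ← map_add, hz, hfy]
      exact p.sub_mem x.2 (Submodule.coe_mem _)
    exact ⟨⟨y, hy⟩, Subtype.ext (by rw [← hfy, ← hz, map_add, hfw, add_zero])⟩

theorem HasFiniteAscent.of_coe_apply (h : f.HasFiniteAscent) (hf₁ : ∀ x : p, (f₁ x : M) = f x) :
    f₁.HasFiniteAscent :=
  let ⟨n, hn⟩ := h
  ⟨n, by rw [ker_pow_eq_comap_of_coe_apply hf₁, ker_pow_eq_comap_of_coe_apply hf₁, hn]⟩

theorem HasFiniteDescent.of_isCompl (h : f.HasFiniteDescent) (hpq : IsCompl p q)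
    (hf₁ : ∀ x : p, (f₁ x : M) = f x) (hfq : ∀ y ∈ q, f y ∈ q) : f₁.HasFiniteDescent :=
  let ⟨n, hn⟩ := h
  ⟨n, by
    rw [range_pow_eq_comap_of_isCompl hpq hf₁ hfq, range_pow_eq_comap_of_isCompl hpq hf₁ hfq, hn]⟩

theorem bijective_of_isCompl (hpq : IsCompl p q) {f₂ : End R q}
    (hf₁ : ∀ x : p, (f₁ x : M) = f x) (hf₂ : ∀ y : q, (f₂ y : M) = f y)
    (h₁ : Bijective f₁) (h₂ : Bijective f₂) : Bijective f := by
  set e := p.prodEquivOfIsCompl q hpq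
  have hconj : ⇑f = e ∘ Prod.map f₁ f₂ ∘ e.symm := by
    funext x
    obtain ⟨y, rfl⟩ := e.surjective x
    simp [e, hf₁, hf₂]
  rw [hconj]
  exact e.bijective.comp ((h₁.prodMap h₂).comp e.symm.bijective)

end Restriction

end Module.End

namespace Submodule

variable {R M : Type*} [Ring R] [AddCommGroup M] [Module R M] [TopologicalSpace M]
  (S : Submodule R M)

def mapQL (f : M →L[R] M) (h : S ≤ S.comap (f : M →ₗ[R] M)) : M ⧸ S →L[R] M ⧸ S :=
  S.liftQL (S.mkQL ∘L f) fun _ hx => (Quotient.mk_eq_zero S).2 (h hx)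

@[simp]
theorem mapQL_mk (f : M →L[R] M) (h : S ≤ S.comap (f : M →ₗ[R] M)) (x : M) :
    S.mapQL f h (Quotient.mk x) = Quotient.mk (f x) :=
  rfl

variable [IsTopologicalAddGroup M] {S}

theorem isUnit_mapQL (u : (M →L[R] M)ˣ) (h : S ≤ S.comap ((u : M →L[R] M) : M →ₗ[R] M))
    (h' : S ≤ S.comap ((↑u⁻¹ : M →L[R] M) : M →ₗ[R] M)) : IsUnit (S.mapQL u h) := by
  refine ⟨⟨S.mapQL u h, S.mapQL _ h', ?_, ?_⟩, rfl⟩ <;>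
  · ext x
    induction x using Quotient.induction_on
    simp [← mul_apply_eq_comp]

end Submodule

namespace ContinuousLinearMap

section Decomposition

variable {𝕜 E : Type*} [NontriviallyNormedField 𝕜] [NormedAddCommGroup E] [NormedSpace 𝕜 E]
  [CompleteSpace E] {p q : Submodule 𝕜 E} {B : E →L[𝕜] E} {B₁ : p →L[𝕜] p} {B₂ : q →L[𝕜] q}

theorem isUnit_of_isCompl (hpq : IsCompl p q) (hB₁ : ∀ x : p, (B₁ x : E) = B x)
    (hB₂ : ∀ y : q, (B₂ y : E) = B y) (h₁ : IsUnit B₁) (h₂ : IsUnit B₂) : IsUnit B :=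
  isUnit_iff_bijective.mpr <| Module.End.bijective_of_isCompl hpq (f₁ := (B₁ : p →ₗ[𝕜] p))
    (f₂ := (B₂ : q →ₗ[𝕜] q)) hB₁ hB₂ ((Module.End.isUnit_iff _).mp (h₁.map toLinearMapRingHom))
    ((Module.End.isUnit_iff _).mp (h₂.map toLinearMapRingHom))

theorem spectrum_subset_union_of_isCompl (hpq : IsCompl p q) (hB₁ : ∀ x : p, (B₁ x : E) = B x)
    (hB₂ : ∀ y : q, (B₂ y : E) = B y) : spectrum 𝕜 B ⊆ spectrum 𝕜 B₁ ∪ spectrum 𝕜 B₂ := by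
  intro μ hμ
  by_contra h
  rw [Set.mem_union, not_or, spectrum.notMem_iff, spectrum.notMem_iff] at h
  exact spectrum.mem_iff.mp hμ <| isUnit_of_isCompl (B := algebraMap 𝕜 _ μ - B) hpq
    (fun x => by simp [hB₁]) (fun y => by simp [hB₂]) h.1 h.2

end Decomposition

section Quotient

variable {R M : Type*} [NormedField R] [SeminormedAddCommGroup M] [NormedSpace R M]

theorem ker_le_comap_ker_of_commute {K T : M →L[R] M} (h : Commute K T) :
    ker (K : M →ₗ[R] M) ≤ (ker (K : M →ₗ[R] M)).comap (T : M →ₗ[R] M) := fun x hx => by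
  change K (T x) = 0
  rw [← mul_apply_eq_comp, h.eq, mul_apply_eq_comp, show K x = 0 from hx, map_zero]

theorem spectrum_mapQL_ker_subset {K T : M →L[R] M} (h : Commute K T) :
    spectrum R ((ker (K : M →ₗ[R] M)).mapQL T (ker_le_comap_ker_of_commute h)) ⊆
      spectrum R T := by
  refine fun μ => not_imp_not.mp fun hμ => ?_
  obtain ⟨u, hu⟩ := spectrum.notMem_iff.mp hμ
  have hKu : Commute K u := hu ▸ (Algebra.commute_algebraMap_right μ K).sub_right h
  rw [spectrum.notMem_iff]
  convert (ker (K : M →ₗ[R] M)).isUnit_mapQL u (ker_le_comap_ker_of_commute hKu)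
    (ker_le_comap_ker_of_commute hKu.units_inv_right)
  ext x
  induction x using Submodule.Quotient.induction_on
  simp [hu, Algebra.algebraMap_eq_smul_one]

theorem bijective_mapQL_ker_pow {T : M →L[R] M} {p : ℕ}
    (hker : ker ((T ^ p : M →L[R] M) : M →ₗ[R] M) = ker ((T ^ (p + 1) : M →L[R] M) : M →ₗ[R] M))
    (hrange : range ((T ^ p : M →L[R] M) : M →ₗ[R] M) =
      range ((T ^ (p + 1) : M →L[R] M) : M →ₗ[R] M)) :
    Bijective ((ker ((T ^ p : M →L[R] M) : M →ₗ[R] M)).mapQL T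
      (ker_le_comap_ker_of_commute ((Commute.refl T).pow_left p))) := by
  constructor
  · refine (injective_iff_map_eq_zero _).mpr fun x hx => ?_
    induction x using Submodule.Quotient.induction_on with | H x => ?_
    rw [Submodule.mapQL_mk, Submodule.Quotient.mk_eq_zero] at hx
    rw [Submodule.Quotient.mk_eq_zero, hker]
    change (T ^ (p + 1)) x = 0
    rwa [pow_succ, mul_apply_eq_comp]
  · intro x
    induction x using Submodule.Quotient.induction_on with | H x => ?_
    obtain ⟨w, hw⟩ : (T ^ p) x ∈ range ((T ^ (p + 1) : M →L[R] M) : M →ₗ[R] M) :=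
      hrange ▸ ⟨x, rfl⟩
    refine ⟨Submodule.Quotient.mk w, ?_⟩
    rw [Submodule.mapQL_mk, Submodule.Quotient.eq, mem_ker, map_sub]
    change (T ^ p) (T w) - (T ^ p) x = 0
    rw [← mul_apply_eq_comp, ← pow_succ, ← hw, coe_coe, sub_self]

end Quotient

theorem isNilpotent_of_hasFiniteAscent_of_hasFiniteDescent {E : Type*} [NormedAddCommGroup E]
    [NormedSpace ℂ E] [CompleteSpace E] {T : E →L[ℂ] E} (hσ : spectrum ℂ T ⊆ {0})
    (ha : Module.End.HasFiniteAscent (T : E →ₗ[ℂ] E))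
    (hd : Module.End.HasFiniteDescent (T : E →ₗ[ℂ] E)) : IsNilpotent T := by
  obtain ⟨p, hker, hrange⟩ := Module.End.exists_ker_pow_eq_and_range_pow_eq ha hd
  simp only [← toLinearMap_pow] at hker hrange
  set S := ker ((T ^ p : E →L[ℂ] E) : E →ₗ[ℂ] E)
  have : IsClosed (S : Set E) := isClosed_ker (T ^ p)
  have hcomm : Commute (T ^ p) T := (Commute.refl T).pow_left p
  suffices Subsingleton (E ⧸ S) from
    ⟨p, ext fun x => (Submodule.Quotient.mk_eq_zero S).mp (Subsingleton.elim _ _)⟩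
  by_contra hQ
  rw [not_subsingleton_iff_nontrivial] at hQ
  obtain ⟨μ, hμ⟩ := spectrum.nonempty (S.mapQL T (ker_le_comap_ker_of_commute hcomm))
  obtain rfl : μ = 0 := hσ (spectrum_mapQL_ker_subset hcomm hμ)
  exact (spectrum.zero_mem_iff ℂ).mp hμ
    (isUnit_iff_bijective.mpr (bijective_mapQL_ker_pow hker hrange))

end ContinuousLinearMap

open Module.End ContinuousLinearMap

theorem isolated_not_pole_of_decomposition_general
    {X : Type*} [NormedAddCommGroup X] [NormedSpace ℂ X] [CompleteSpace X]
    (A : X →L[ℂ] X) (lam : ℂ) (hmem : lam ∈ spectrum ℂ A)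
    (M N : Submodule ℂ X) (hcompl : IsCompl M N)
    [CompleteSpace M] [CompleteSpace N]
    (A₁ : M →L[ℂ] M) (A₂ : N →L[ℂ] N)
    (hA₁ : ∀ x : M, (A₁ x : X) = A x) (hA₂ : ∀ x : N, (A₂ x : X) = A x)
    (hq : spectrum ℂ (A₁ - lam • 1) = {0}) (hnn : ¬ IsNilpotent (A₁ - lam • 1))
    (hinv : IsUnit (A₂ - lam • 1)) :
    (∃ U ∈ nhds lam, U ∩ spectrum ℂ A = {lam}) ∧
    ¬ ((∃ n : ℕ, LinearMap.ker (((A - lam • 1) ^ n : X →L[ℂ] X) : X →ₗ[ℂ] X) = LinearMap.ker (((A - lam • 1) ^ (n + 1) : X →L[ℂ] X) : X →ₗ[ℂ] X)) ∧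
       (∃ n : ℕ, LinearMap.range (((A - lam • 1) ^ n : X →L[ℂ] X) : X →ₗ[ℂ] X) =
         LinearMap.range (((A - lam • 1) ^ (n + 1) : X →L[ℂ] X) : X →ₗ[ℂ] X))) := by
  have hσ₁ : spectrum ℂ A₁ = {lam} := by
    rw [← sub_add_cancel A₁ (algebraMap ℂ _ lam), ← spectrum.add_singleton_eq,
      Algebra.algebraMap_eq_smul_one, hq, Set.singleton_add_singleton, zero_add]
  have hlam₂ : lam ∉ spectrum ℂ A₂ := by
    rw [spectrum.notMem_iff, ← neg_sub, Algebra.algebraMap_eq_smul_one]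
    exact hinv.neg
  refine ⟨⟨(spectrum ℂ A₂)ᶜ, (spectrum.isClosed (𝕜 := ℂ) A₂).isOpen_compl.mem_nhds hlam₂, ?_⟩, ?_⟩
  · refine subset_antisymm (fun μ ⟨hμ₂, hμ⟩ => ?_) (Set.singleton_subset_iff.mpr ⟨hlam₂, hmem⟩)
    rcases spectrum_subset_union_of_isCompl hcompl hA₁ hA₂ hμ with h | h
    · rwa [hσ₁] at h
    · exact absurd h hμ₂
  · rintro ⟨hasc, hdesc⟩
    have hT₁ : ∀ x : M, ((A₁ - lam • 1) x : X) = (A - lam • 1) x := by simp [hA₁]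
    have hT₂ : ∀ y ∈ N, (A - lam • 1) y ∈ N := fun y hy => by
      simpa [hA₂] using ((A₂ - lam • 1) ⟨y, hy⟩).2
    simp only [toLinearMap_pow] at hasc hdesc
    exact hnn <| isNilpotent_of_hasFiniteAscent_of_hasFiniteDescent hq.subset
      (HasFiniteAscent.of_coe_apply hasc hT₁) (HasFiniteDescent.of_isCompl hdesc hcompl hT₁ hT₂)

/-- If `X = M ⊕ N` with `M`, `N` nonzero closed `A`-invariant subspaces such that
`(A − λ)|_M` is quasi-nilpotent but not nilpotent and `(A − λ)|_N` is invertible, then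
`λ` is an isolated point of `σ(A)` that is not a pole of `A`. -/
theorem isolated_not_pole_of_decomposition
    {X : Type*} [NormedAddCommGroup X] [NormedSpace ℂ X] [CompleteSpace X]
    (A : X →L[ℂ] X) (lam : ℂ) (hmem : lam ∈ spectrum ℂ A)
    (M N : Submodule ℂ X) (hMc : IsClosed (M : Set X)) (hNc : IsClosed (N : Set X))
    (hM : M ≠ ⊥) (hN : N ≠ ⊥) (hcompl : IsCompl M N)
    [CompleteSpace M] [CompleteSpace N]
    (A₁ : M →L[ℂ] M) (A₂ : N →L[ℂ] N)
    (hA₁ : ∀ x : M, (A₁ x : X) = A x) (hA₂ : ∀ x : N, (A₂ x : X) = A x)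
    (hq : spectrum ℂ (A₁ - lam • 1) = {0}) (hnn : ¬ IsNilpotent (A₁ - lam • 1))
    (hinv : IsUnit (A₂ - lam • 1)) :
    (∃ U ∈ nhds lam, U ∩ spectrum ℂ A = {lam}) ∧
    ¬ ((∃ n : ℕ, LinearMap.ker (((A - lam • 1) ^ n : X →L[ℂ] X) : X →ₗ[ℂ] X) = LinearMap.ker (((A - lam • 1) ^ (n + 1) : X →L[ℂ] X) : X →ₗ[ℂ] X)) ∧
       (∃ n : ℕ, LinearMap.range (((A - lam • 1) ^ n : X →L[ℂ] X) : X →ₗ[ℂ] X) =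
         LinearMap.range (((A - lam • 1) ^ (n + 1) : X →L[ℂ] X) : X →ₗ[ℂ] X))) :=
  isolated_not_pole_of_decomposition_general A lam hmem M N hcompl A₁ A₂ hA₁ hA₂ hq hnn hinv
end

section
/- Let X, Y be complex Banach spaces, A ∈ B(X), B ∈ B(Y) with σ(A) = {0} and A not nilpotent (i.e., A is quasi-nilpotent but not nilpotent), and B not nilpotent. Then the multiplication operator τ_{AB}(U) = AUB on B(Y,X) satisfies σ(τ_{AB}) = {0} and τ_{AB} is not nilpotent; in particular 0 is not a pole of τ_{AB}. -/
open Filter Topology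
open scoped ENNReal NNReal

namespace TauAux

variable {V : Type*} [NormedAddCommGroup V] [NormedSpace ℂ V] [CompleteSpace V]

lemma pow_apply_add (S : V →L[ℂ] V) (a b : ℕ) (v : V) :
    (S ^ (a + b)) v = (S ^ a) ((S ^ b) v) := by
  rw [pow_add]; rfl

lemma ker_le_ker (S : V →L[ℂ] V) (a b : ℕ) :
    LinearMap.ker ((S ^ a : V →L[ℂ] V) : V →ₗ[ℂ] V) ≤ LinearMap.ker ((S ^ (b + a) : V →L[ℂ] V) : V →ₗ[ℂ] V) := by
  intro v hv
  rw [LinearMap.mem_ker, ContinuousLinearMap.coe_coe] at hv ⊢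
  rw [pow_apply_add, hv, map_zero]

lemma ker_stab (S : V →L[ℂ] V) {n : ℕ}
    (h : LinearMap.ker ((S ^ n : V →L[ℂ] V) : V →ₗ[ℂ] V) = LinearMap.ker ((S ^ (n + 1) : V →L[ℂ] V) : V →ₗ[ℂ] V)) :
    ∀ k, LinearMap.ker ((S ^ (n + k) : V →L[ℂ] V) : V →ₗ[ℂ] V) = LinearMap.ker ((S ^ n : V →L[ℂ] V) : V →ₗ[ℂ] V) := by
  intro k
  induction k with
  | zero => rfl
  | succ k ih =>
    refine le_antisymm ?_ ?_
    · intro v hv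
      rw [LinearMap.mem_ker] at hv
      have h1 : (S ^ (n + 1)) ((S ^ k) v) = 0 := by
        rw [← pow_apply_add]
        rw [show n + 1 + k = n + (k + 1) by omega]
        exact hv
      have h2 : (S ^ k) v ∈ LinearMap.ker ((S ^ n : V →L[ℂ] V) : V →ₗ[ℂ] V) := by
        rw [h]; exact h1
      rw [LinearMap.mem_ker] at h2
      rw [← ih, LinearMap.mem_ker, ContinuousLinearMap.coe_coe, pow_apply_add]
      exact h2
    · rw [← ih]
      intro v hv
      rw [LinearMap.mem_ker, ContinuousLinearMap.coe_coe] at hv ⊢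
      rw [show n + (k + 1) = 1 + (n + k) by omega, pow_apply_add, hv, map_zero]

lemma range_stab (S : V →L[ℂ] V) {n : ℕ}
    (h : LinearMap.range ((S ^ n : V →L[ℂ] V) : V →ₗ[ℂ] V) = LinearMap.range ((S ^ (n + 1) : V →L[ℂ] V) : V →ₗ[ℂ] V)) :
    ∀ k, LinearMap.range ((S ^ (n + k) : V →L[ℂ] V) : V →ₗ[ℂ] V) = LinearMap.range ((S ^ n : V →L[ℂ] V) : V →ₗ[ℂ] V) := by
  intro k
  induction k with
  | zero => rfl
  | succ k ih =>
    refine le_antisymm ?_ ?_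
    · rintro w ⟨v, rfl⟩
      rw [← ih]
      exact ⟨(S ^ 1) v, by rw [ContinuousLinearMap.coe_coe, ContinuousLinearMap.coe_coe, ← pow_apply_add,
        show n + k + 1 = n + (k + 1) by omega]⟩
    · intro w hw
      rw [← ih] at hw
      obtain ⟨v, rfl⟩ := hw
      have h1 : (S ^ n) v ∈ LinearMap.range ((S ^ (n + 1) : V →L[ℂ] V) : V →ₗ[ℂ] V) := by
        rw [← h]; exact ⟨v, rfl⟩
      obtain ⟨u, hu⟩ := h1
      refine ⟨u, ?_⟩
      calc (S ^ (n + (k + 1))) u = (S ^ k) ((S ^ (n + 1)) u) := by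
            rw [show n + (k + 1) = k + (n + 1) by omega, pow_apply_add]
        _ = (S ^ k) ((S ^ n) v) := by exact congrArg (S ^ k) hu
        _ = (S ^ (n + k)) v := by
            rw [show n + k = k + n by omega, pow_apply_add]

lemma isNilpotent_of_stab (S : V →L[ℂ] V)
    (hq : ∀ r : ℝ, 0 < r → ∀ᶠ k : ℕ in atTop, ‖S ^ k‖ ≤ r ^ k)
    (hker' : ∃ n : ℕ, LinearMap.ker ((S ^ n : V →L[ℂ] V) : V →ₗ[ℂ] V) = LinearMap.ker ((S ^ (n + 1) : V →L[ℂ] V) : V →ₗ[ℂ] V))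
    (hran' : ∃ n : ℕ, LinearMap.range ((S ^ n : V →L[ℂ] V) : V →ₗ[ℂ] V) = LinearMap.range ((S ^ (n + 1) : V →L[ℂ] V) : V →ₗ[ℂ] V)) :
    IsNilpotent S := by
  obtain ⟨n, hn⟩ := hker'
  obtain ⟨m, hm⟩ := hran'
  set d := max n m with hd
  have hker : LinearMap.ker ((S ^ d : V →L[ℂ] V) : V →ₗ[ℂ] V) = LinearMap.ker ((S ^ (d + 1) : V →L[ℂ] V) : V →ₗ[ℂ] V) := by
    have h1 := ker_stab S hn (d - n)
    have h2 := ker_stab S hn (d + 1 - n)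
    rw [Nat.add_sub_cancel' (le_max_left n m)] at h1
    rw [Nat.add_sub_cancel' (le_trans (le_max_left n m) (Nat.le_succ d))] at h2
    rw [h1, h2]
  have hran : LinearMap.range ((S ^ d : V →L[ℂ] V) : V →ₗ[ℂ] V) = LinearMap.range ((S ^ (d + 1) : V →L[ℂ] V) : V →ₗ[ℂ] V) := by
    have h1 := range_stab S hm (d - m)
    have h2 := range_stab S hm (d + 1 - m)
    rw [Nat.add_sub_cancel' (le_max_right n m)] at h1
    rw [Nat.add_sub_cancel' (le_trans (le_max_right n m) (Nat.le_succ d))] at h2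
    rw [h1, h2]
  set K : Submodule ℂ V := LinearMap.ker ((S ^ d : V →L[ℂ] V) : V →ₗ[ℂ] V) with hK
  by_cases hKtop : K = ⊤
  · refine ⟨d, ContinuousLinearMap.ext fun v => ?_⟩
    have hv : v ∈ K := hKtop ▸ Submodule.mem_top
    rw [hK, LinearMap.mem_ker] at hv
    rw [ContinuousLinearMap.zero_apply]; exact hv
  · exfalso
    haveI hKc : IsClosed (K : Set V) := ContinuousLinearMap.isClosed_ker (S ^ d)
    have hSK : K ≤ K.comap (S : V →ₗ[ℂ] V) := by
      intro v hv
      rw [Submodule.mem_comap]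
      rw [hK, LinearMap.mem_ker] at hv ⊢
      have hv1 : v ∈ LinearMap.ker ((S ^ (d + 1) : V →L[ℂ] V) : V →ₗ[ℂ] V) := by
        rw [← hker, LinearMap.mem_ker]; exact hv
      rw [LinearMap.mem_ker] at hv1
      calc (S ^ d) ((S : V →ₗ[ℂ] V) v) = (S ^ d) ((S ^ 1) v) := by simp
        _ = (S ^ (d + 1)) v := by rw [← pow_apply_add]
        _ = 0 := hv1
    set Sq : (V ⧸ K) →ₗ[ℂ] (V ⧸ K) := Submodule.mapQ K K (S : V →ₗ[ℂ] V) hSK with hSq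
    have hSq_mk : ∀ v : V, Sq (Submodule.Quotient.mk v) = Submodule.Quotient.mk (S v) :=
      fun v => rfl
    have hSqbound : ∀ q : V ⧸ K, ‖Sq q‖ ≤ (‖S‖ + 1) * ‖q‖ := by
      intro q
      refine le_of_forall_pos_le_add fun ε hε => ?_
      have hb : (0:ℝ) < ‖S‖ + 1 := by positivity
      obtain ⟨v, hv, hnorm⟩ := Submodule.Quotient.norm_mk_lt q (div_pos hε hb)
      have h1 : ‖Sq q‖ ≤ ‖S v‖ := by
        rw [← hv, hSq_mk]
        exact Submodule.Quotient.norm_mk_le K (S v)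
      have h2 : ‖S v‖ ≤ ‖S‖ * ‖v‖ := S.le_opNorm v
      have h3 : ‖S‖ * ‖v‖ ≤ (‖S‖ + 1) * ‖v‖ := by nlinarith [norm_nonneg v]
      have h4 : (‖S‖ + 1) * ‖v‖ ≤ (‖S‖ + 1) * (‖q‖ + ε / (‖S‖ + 1)) := by nlinarith
      have h5 : (‖S‖ + 1) * (‖q‖ + ε / (‖S‖ + 1)) = (‖S‖ + 1) * ‖q‖ + ε := by
        field_simp
      linarith
    set Sc : (V ⧸ K) →L[ℂ] (V ⧸ K) := Sq.mkContinuous (‖S‖ + 1) hSqbound with hSc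
    have hSc_mk : ∀ v : V, Sc (Submodule.Quotient.mk v) = Submodule.Quotient.mk (S v) :=
      fun v => hSq_mk v
    have hinj : LinearMap.ker (Sc : (V ⧸ K) →ₗ[ℂ] (V ⧸ K)) = ⊥ := by
      rw [Submodule.eq_bot_iff]
      intro q hq'
      obtain ⟨v, rfl⟩ := Submodule.Quotient.mk_surjective K q
      rw [LinearMap.mem_ker, ContinuousLinearMap.coe_coe, hSc_mk, Submodule.Quotient.mk_eq_zero] at hq'
      rw [Submodule.Quotient.mk_eq_zero]
      rw [hK, LinearMap.mem_ker] at hq' ⊢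
      have hv1 : v ∈ LinearMap.ker ((S ^ (d + 1) : V →L[ℂ] V) : V →ₗ[ℂ] V) := by
        rw [LinearMap.mem_ker, show d + 1 = d + 1 from rfl]
        calc (S ^ (d + 1)) v = (S ^ d) ((S ^ 1) v) := by rw [← pow_apply_add]
          _ = (S ^ d) (S v) := by norm_num
          _ = 0 := hq'
      rw [← hker, LinearMap.mem_ker] at hv1
      exact hv1
    have hsurj : LinearMap.range (Sc : (V ⧸ K) →ₗ[ℂ] (V ⧸ K)) = ⊤ := by
      rw [Submodule.eq_top_iff']
      intro q
      obtain ⟨v, rfl⟩ := Submodule.Quotient.mk_surjective K q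
      have h1 : (S ^ d) v ∈ LinearMap.range ((S ^ (d + 1) : V →L[ℂ] V) : V →ₗ[ℂ] V) := by
        rw [← hran]; exact ⟨v, rfl⟩
      obtain ⟨u, hu⟩ := h1
      refine ⟨Submodule.Quotient.mk u, ?_⟩
      rw [ContinuousLinearMap.coe_coe, hSc_mk]
      rw [Submodule.Quotient.eq]
      rw [hK, LinearMap.mem_ker, ContinuousLinearMap.coe_coe, map_sub]
      have h2 : (S ^ d) (S u) = (S ^ (d + 1)) u := by
        rw [show d + 1 = d + 1 from rfl]
        calc (S ^ d) (S u) = (S ^ d) ((S ^ 1) u) := by norm_num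
          _ = (S ^ (d + 1)) u := by rw [← pow_apply_add]
      rw [ContinuousLinearMap.coe_coe] at hu; rw [h2, hu, sub_self]
    set e := ContinuousLinearEquiv.ofBijective Sc hinj hsurj with he
    have heq : ∀ q, e q = Sc q := fun q => by
      rw [he]; rw [ContinuousLinearEquiv.coeFn_ofBijective]
    set C := ‖(e.symm : (V ⧸ K) →L[ℂ] (V ⧸ K))‖ with hCdef
    have hC0 : 0 ≤ C := norm_nonneg _
    have hlow : ∀ q : V ⧸ K, ‖q‖ ≤ C * ‖Sc q‖ := by
      intro q
      calc ‖q‖ = ‖e.symm (e q)‖ := by rw [e.symm_apply_apply]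
        _ ≤ C * ‖e q‖ := by
            simpa using (e.symm : (V ⧸ K) →L[ℂ] (V ⧸ K)).le_opNorm (e q)
        _ = C * ‖Sc q‖ := by rw [heq]
    have key : ∀ (k : ℕ) (v : V),
        ‖(Submodule.Quotient.mk v : V ⧸ K)‖
          ≤ C ^ k * ‖(Submodule.Quotient.mk ((S ^ k) v) : V ⧸ K)‖ := by
      intro k
      induction k with
      | zero => intro v; simp
      | succ k ih =>
        intro v
        have h1 : ‖(Submodule.Quotient.mk v : V ⧸ K)‖
            ≤ C * ‖(Submodule.Quotient.mk (S v) : V ⧸ K)‖ := by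
          have := hlow (Submodule.Quotient.mk v)
          rwa [hSc_mk] at this
        have h2 := ih (S v)
        have h3 : (S ^ k) (S v) = (S ^ (k + 1)) v := by
          calc (S ^ k) (S v) = (S ^ k) ((S ^ 1) v) := by norm_num
            _ = (S ^ (k + 1)) v := by rw [← pow_apply_add]
        rw [h3] at h2
        calc ‖(Submodule.Quotient.mk v : V ⧸ K)‖
            ≤ C * ‖(Submodule.Quotient.mk (S v) : V ⧸ K)‖ := h1
          _ ≤ C * (C ^ k * ‖(Submodule.Quotient.mk ((S ^ (k+1)) v) : V ⧸ K)‖) := by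
              exact mul_le_mul_of_nonneg_left h2 hC0
          _ = C ^ (k + 1) * ‖(Submodule.Quotient.mk ((S ^ (k+1)) v) : V ⧸ K)‖ := by
              ring
    obtain ⟨v, hv⟩ : ∃ v, v ∉ K := by
      by_contra h; push_neg at h; exact hKtop (Submodule.eq_top_iff'.mpr h)
    have hq0 : (Submodule.Quotient.mk v : V ⧸ K) ≠ 0 := by
      simpa [Submodule.Quotient.mk_eq_zero] using hv
    have hqpos : 0 < ‖(Submodule.Quotient.mk v : V ⧸ K)‖ := norm_pos_iff.mpr hq0
    have hCpos : 0 < C := by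
      rcases lt_or_eq_of_le hC0 with h | h
      · exact h
      · exfalso
        have := hlow (Submodule.Quotient.mk v)
        rw [← h, zero_mul] at this
        exact hqpos.not_ge this
    have hev1 := hq (C⁻¹ / 2) (by positivity)
    have hev2 : ∀ᶠ k : ℕ in atTop,
        (1/2 : ℝ) ^ k * ‖v‖ < ‖(Submodule.Quotient.mk v : V ⧸ K)‖ := by
      have ht : Tendsto (fun k : ℕ => (1/2 : ℝ) ^ k * ‖v‖) atTop (𝓝 0) := by
        simpa using (tendsto_pow_atTop_nhds_zero_of_lt_one (by norm_num : (0:ℝ) ≤ 1/2)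
          (by norm_num : (1/2 : ℝ) < 1)).mul_const ‖v‖
      exact ht.eventually_lt_const hqpos
    obtain ⟨k, h1, h2⟩ := (hev1.and hev2).exists
    have hCk : C * (C⁻¹ / 2) = 1 / 2 := by field_simp
    have hmain : ‖(Submodule.Quotient.mk v : V ⧸ K)‖ ≤ (1/2 : ℝ) ^ k * ‖v‖ := by
      calc ‖(Submodule.Quotient.mk v : V ⧸ K)‖
          ≤ C ^ k * ‖(Submodule.Quotient.mk ((S ^ k) v) : V ⧸ K)‖ := key k v
        _ ≤ C ^ k * ‖(S ^ k) v‖ := by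
            exact mul_le_mul_of_nonneg_left (Submodule.Quotient.norm_mk_le K _)
              (pow_nonneg hC0 k)
        _ ≤ C ^ k * (‖S ^ k‖ * ‖v‖) := by
            exact mul_le_mul_of_nonneg_left ((S ^ k).le_opNorm v) (pow_nonneg hC0 k)
        _ ≤ C ^ k * ((C⁻¹ / 2) ^ k * ‖v‖) := by
            refine mul_le_mul_of_nonneg_left ?_ (pow_nonneg hC0 k)
            exact mul_le_mul_of_nonneg_right h1 (norm_nonneg v)
        _ = (C * (C⁻¹ / 2)) ^ k * ‖v‖ := by rw [mul_pow]; ring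
        _ = (1/2 : ℝ) ^ k * ‖v‖ := by rw [hCk]
    exact absurd (lt_of_le_of_lt hmain h2) (lt_irrefl _)

lemma eventually_norm_pow_le {W : Type*} [NormedAddCommGroup W] [NormedSpace ℂ W]
    (S : W →L[ℂ] W)
    (h : Tendsto (fun k : ℕ => (‖S ^ k‖₊ : ℝ≥0∞) ^ (1 / (k : ℝ))) atTop (𝓝 0)) :
    ∀ r : ℝ, 0 < r → ∀ᶠ k : ℕ in atTop, ‖S ^ k‖ ≤ r ^ k := by
  intro r hr
  have h1 : ∀ᶠ k : ℕ in atTop, (‖S ^ k‖₊ : ℝ≥0∞) ^ (1 / (k : ℝ)) < ENNReal.ofReal r :=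
    h.eventually_lt_const (by simpa using ENNReal.ofReal_pos.mpr hr)
  filter_upwards [h1, Filter.eventually_ge_atTop 1] with k hk hk1
  have hk0 : (k : ℝ) ≠ 0 := Nat.cast_ne_zero.mpr (by omega)
  have h2 : ((‖S ^ k‖₊ : ℝ≥0∞) ^ (1 / (k : ℝ))) ^ (k : ℕ) ≤ (ENNReal.ofReal r) ^ k :=
    pow_le_pow_left' hk.le k
  have h3 : ((‖S ^ k‖₊ : ℝ≥0∞) ^ (1 / (k : ℝ))) ^ (k : ℕ) = (‖S ^ k‖₊ : ℝ≥0∞) := by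
    rw [← ENNReal.rpow_natCast _ k, ← ENNReal.rpow_mul, one_div,
      inv_mul_cancel₀ hk0, ENNReal.rpow_one]
  rw [h3] at h2
  have h4 : (‖S ^ k‖₊ : ℝ≥0∞) ≤ ENNReal.ofReal (r ^ k) := by
    rwa [ENNReal.ofReal_pow hr.le]
  rw [← enorm_eq_nnnorm, ← ofReal_norm] at h4
  exact (ENNReal.ofReal_le_ofReal_iff (pow_nonneg hr.le k)).mp h4

lemma tendsto_of_eventually {W : Type*} [NormedAddCommGroup W] [NormedSpace ℂ W]
    (S : W →L[ℂ] W)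
    (h : ∀ r : ℝ, 0 < r → ∀ᶠ k : ℕ in atTop, ‖S ^ k‖ ≤ r ^ k) :
    Tendsto (fun k : ℕ => (‖S ^ k‖₊ : ℝ≥0∞) ^ (1 / (k : ℝ))) atTop (𝓝 0) := by
  rw [ENNReal.tendsto_nhds_zero]
  intro ε hε
  obtain ⟨r, hr0, hrε⟩ : ∃ r : ℝ, 0 < r ∧ ENNReal.ofReal r ≤ ε := by
    rcases eq_or_ne ε ⊤ with hh | hh
    · exact ⟨1, one_pos, by simp [hh]⟩
    · exact ⟨ε.toReal, ENNReal.toReal_pos hε.ne' hh, by rw [ENNReal.ofReal_toReal hh]⟩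
  filter_upwards [h r hr0, Filter.eventually_ge_atTop 1] with k hk hk1
  have hk0 : (k : ℝ) ≠ 0 := Nat.cast_ne_zero.mpr (by omega)
  have h1 : (‖S ^ k‖₊ : ℝ≥0∞) ≤ (ENNReal.ofReal r) ^ k := by
    rw [← ENNReal.ofReal_pow hr0.le, ← enorm_eq_nnnorm, ← ofReal_norm]
    exact ENNReal.ofReal_le_ofReal hk
  have h2 : (‖S ^ k‖₊ : ℝ≥0∞) ^ (1 / (k : ℝ)) ≤ ((ENNReal.ofReal r) ^ k) ^ (1 / (k : ℝ)) :=
    ENNReal.rpow_le_rpow h1 (by positivity)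
  have h3 : ((ENNReal.ofReal r) ^ k) ^ (1 / (k : ℝ)) = ENNReal.ofReal r := by
    rw [← ENNReal.rpow_natCast _ k, ← ENNReal.rpow_mul, mul_one_div,
      div_self hk0, ENNReal.rpow_one]
  exact le_trans (le_trans h2 (le_of_eq h3)) hrε

end TauAux

/-- If `A` is quasi-nilpotent but not nilpotent and `B` is not nilpotent, then
`τ_{AB} : U ↦ A U B` satisfies `σ(τ_{AB}) = {0}`, `τ_{AB}` is not nilpotent, and
`0` is not a pole of `τ_{AB}` (i.e. `τ_{AB}` fails to have finite ascent and descent). -/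
theorem tau_quasinilpotent_zero_not_pole
    {X Y : Type*} [NormedAddCommGroup X] [NormedSpace ℂ X] [CompleteSpace X]
    [NormedAddCommGroup Y] [NormedSpace ℂ Y] [CompleteSpace Y]
    (A : X →L[ℂ] X) (B : Y →L[ℂ] Y)
    (T : (Y →L[ℂ] X) →L[ℂ] (Y →L[ℂ] X))
    (hT : ∀ U : Y →L[ℂ] X, T U = A.comp (U.comp B))
    (hAq : spectrum ℂ A = {0}) (hAn : ¬ IsNilpotent A) (hBn : ¬ IsNilpotent B) :
    spectrum ℂ T = {0} ∧ ¬ IsNilpotent T ∧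
    ¬ ((∃ n : ℕ, LinearMap.ker ((T ^ n : (Y →L[ℂ] X) →L[ℂ] (Y →L[ℂ] X)) : (Y →L[ℂ] X) →ₗ[ℂ] (Y →L[ℂ] X)) =
          LinearMap.ker ((T ^ (n + 1) : (Y →L[ℂ] X) →L[ℂ] (Y →L[ℂ] X)) : (Y →L[ℂ] X) →ₗ[ℂ] (Y →L[ℂ] X))) ∧
       (∃ n : ℕ, LinearMap.range ((T ^ n : (Y →L[ℂ] X) →L[ℂ] (Y →L[ℂ] X)) : (Y →L[ℂ] X) →ₗ[ℂ] (Y →L[ℂ] X)) =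
          LinearMap.range ((T ^ (n + 1) : (Y →L[ℂ] X) →L[ℂ] (Y →L[ℂ] X)) : (Y →L[ℂ] X) →ₗ[ℂ] (Y →L[ℂ] X)))) := by
  have Tpow : ∀ (k : ℕ) (U : Y →L[ℂ] X),
      (T ^ k) U = (A ^ k).comp (U.comp (B ^ k)) := by
    intro k
    induction k with
    | zero => intro U; ext y; simp
    | succ k ih =>
      intro U
      rw [pow_succ, ContinuousLinearMap.mul_apply, hT, ih]
      ext y
      simp only [ContinuousLinearMap.comp_apply]
      rw [pow_succ A, pow_succ' B, ContinuousLinearMap.mul_apply,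
        ContinuousLinearMap.mul_apply]
  -- nonzero powers of A and B
  have hApow : ∀ k : ℕ, ∃ x : X, (A ^ k) x ≠ 0 := by
    intro k
    by_contra h; push_neg at h
    exact hAn ⟨k, ContinuousLinearMap.ext fun x => by simp [h x]⟩
  have hBpow : ∀ k : ℕ, ∃ y : Y, (B ^ k) y ≠ 0 := by
    intro k
    by_contra h; push_neg at h
    exact hBn ⟨k, ContinuousLinearMap.ext fun y => by simp [h y]⟩
  -- nontriviality of B(Y, X)
  obtain ⟨x0, hx0⟩ : ∃ x : X, x ≠ 0 := by
    obtain ⟨x, hx⟩ := hApow 1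
    exact ⟨(A ^ 1) x, hx⟩
  obtain ⟨y0, hy0⟩ : ∃ y : Y, y ≠ 0 := by
    obtain ⟨y, hy⟩ := hBpow 1
    exact ⟨(B ^ 1) y, hy⟩
  obtain ⟨g0, hg0norm, hg0⟩ := exists_dual_vector ℂ y0 (norm_ne_zero_iff.mpr hy0)
  have hU0 : (g0.smulRight x0) ≠ 0 := by
    intro h
    have h1 : g0 y0 • x0 = 0 := by
      rw [← ContinuousLinearMap.smulRight_apply, h]; simp
    have hgne : g0 y0 ≠ 0 := by
      rw [hg0]
      simpa using norm_ne_zero_iff.mpr hy0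
    exact hx0 ((smul_eq_zero.mp h1).resolve_left hgne)
  haveI : Nontrivial (Y →L[ℂ] X) := nontrivial_of_ne _ 0 hU0
  -- T is not nilpotent
  have hTn : ¬ IsNilpotent T := by
    rintro ⟨k, hk⟩
    obtain ⟨x, hx⟩ := hApow k
    obtain ⟨y, hy⟩ := hBpow k
    obtain ⟨g, hgnorm, hg⟩ := exists_dual_vector ℂ ((B ^ k) y) (norm_ne_zero_iff.mpr hy)
    have h2 : ((T ^ k) (g.smulRight x)) y = g ((B ^ k) y) • (A ^ k) x := by
      rw [Tpow]
      simp [ContinuousLinearMap.comp_apply]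
    have h3 : g ((B ^ k) y) • (A ^ k) x = 0 := by
      rw [← h2, hk]; simp
    have hnz : g ((B ^ k) y) ≠ 0 := by
      rw [hg]
      simpa using norm_ne_zero_iff.mpr hy
    exact hx ((smul_eq_zero.mp h3).resolve_left hnz)
  -- spectral radius of A is zero
  have hAsr : spectralRadius ℂ A = 0 := by
    rw [spectralRadius, hAq]
    simp
  have hAgel : Tendsto (fun k : ℕ => (‖A ^ k‖₊ : ℝ≥0∞) ^ (1 / (k : ℝ))) atTop (𝓝 0) := by
    have := spectrum.pow_nnnorm_pow_one_div_tendsto_nhds_spectralRadius A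
    rwa [hAsr] at this
  have hA' : ∀ r : ℝ, 0 < r → ∀ᶠ k : ℕ in atTop, ‖A ^ k‖ ≤ r ^ k :=
    TauAux.eventually_norm_pow_le A hAgel
  -- power norm bound for B
  have hBnorm : ∀ k : ℕ, ‖B ^ k‖ ≤ (‖B‖ + 1) ^ k := by
    intro k
    induction k with
    | zero =>
      simpa [ContinuousLinearMap.one_def] using
        (ContinuousLinearMap.norm_id_le : ‖ContinuousLinearMap.id ℂ Y‖ ≤ 1)
    | succ k ih =>
      rw [pow_succ, pow_succ]
      calc ‖B ^ k * B‖ ≤ ‖B ^ k‖ * ‖B‖ := norm_mul_le _ _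
        _ ≤ (‖B‖ + 1) ^ k * (‖B‖ + 1) := by
            apply mul_le_mul ih (by linarith) (norm_nonneg B) (by positivity)
  -- norm estimate for T^k
  have hT' : ∀ r : ℝ, 0 < r → ∀ᶠ k : ℕ in atTop, ‖T ^ k‖ ≤ r ^ k := by
    intro r hr
    have hb : (0:ℝ) < ‖B‖ + 1 := by positivity
    have hs : 0 < r / (‖B‖ + 1) := by positivity
    filter_upwards [hA' _ hs] with k hk
    have hTk : ‖T ^ k‖ ≤ ‖A ^ k‖ * (‖B‖ + 1) ^ k := by
      refine ContinuousLinearMap.opNorm_le_bound _ (by positivity) fun U => ?_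
      rw [Tpow]
      calc ‖(A ^ k).comp (U.comp (B ^ k))‖ ≤ ‖A ^ k‖ * ‖U.comp (B ^ k)‖ :=
            ContinuousLinearMap.opNorm_comp_le _ _
        _ ≤ ‖A ^ k‖ * (‖U‖ * ‖B ^ k‖) := by
            apply mul_le_mul_of_nonneg_left (ContinuousLinearMap.opNorm_comp_le _ _)
              (norm_nonneg _)
        _ ≤ ‖A ^ k‖ * (‖U‖ * (‖B‖ + 1) ^ k) := by
            apply mul_le_mul_of_nonneg_left
              (mul_le_mul_of_nonneg_left (hBnorm k) (norm_nonneg U)) (norm_nonneg _)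
        _ = ‖A ^ k‖ * (‖B‖ + 1) ^ k * ‖U‖ := by ring
    calc ‖T ^ k‖ ≤ ‖A ^ k‖ * (‖B‖ + 1) ^ k := hTk
      _ ≤ (r / (‖B‖ + 1)) ^ k * (‖B‖ + 1) ^ k := by
          apply mul_le_mul_of_nonneg_right hk (by positivity)
      _ = r ^ k := by
          rw [← mul_pow, div_mul_cancel₀ _ hb.ne']
  -- spectral radius of T is zero
  have hTzero : spectralRadius ℂ T = 0 :=
    tendsto_nhds_unique (spectrum.pow_nnnorm_pow_one_div_tendsto_nhds_spectralRadius T)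
      (TauAux.tendsto_of_eventually T hT')
  have hspec : spectrum ℂ T = {0} := by
    apply Set.eq_singleton_iff_nonempty_unique_mem.mpr
    refine ⟨spectrum.nonempty T, fun lam hlam => ?_⟩
    have h1 : (‖lam‖₊ : ℝ≥0∞) ≤ spectralRadius ℂ T := by
      rw [spectralRadius]
      exact le_iSup₂ (f := fun k (_ : k ∈ spectrum ℂ T) => (‖k‖₊ : ℝ≥0∞)) lam hlam
    rw [hTzero] at h1
    simpa using h1
  refine ⟨hspec, hTn, ?_⟩
  rintro ⟨hk, hr⟩
  exact hTn (TauAux.isNilpotent_of_stab T hT' hk hr)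
end

section
/- Let X, Y be complex Banach spaces, A ∈ B(X) with σ(A) = {μ}, B ∈ B(Y) with σ(B) = {ν}, μν ≠ 0. If B − ν is quasi-nilpotent but not nilpotent, then τ_{AB} − μν is not nilpotent, where τ_{AB}(U) = AUB on B(Y,X). -/
/-!
On rank-one operators `T` acts as `A ⊗ Bᵀ`: `T ^ j (f.smulRight x) = (f ∘ B ^ j).smulRight (A ^ j x)`.
So if `(T - μν) ^ n = 0`, evaluating `(T - μν) ^ n (f.smulRight x)` at `y` shows that
`q = ∑ j, r_j f (B ^ j y) X ^ j`, with `r = (X - μν) ^ n`, annihilates `A`. As `μ ∈ σ(A)`,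
`q(μ) ∈ σ(q(A)) = {0}`; but `q(μ) = f (r(μB) y) = μ ^ n f ((B - ν) ^ n y)`, and since `μ ≠ 0` and
functionals separate points this forces `(B - ν) ^ n = 0`.
-/

open Polynomial ContinuousLinearMap Finset

theorem sum_mul_pow_eq_zero_of_mem_spectrum {𝕜 R : Type*} [Field 𝕜] [Ring R] [Algebra 𝕜 R]
    {a : R} {μ : 𝕜} (hμ : μ ∈ spectrum 𝕜 a) (s : Finset ℕ) (c : ℕ → 𝕜)
    (h : ∑ j ∈ s, c j • a ^ j = 0) : ∑ j ∈ s, c j * μ ^ j = 0 := by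
  have : Nontrivial R := by
    by_contra hR
    rw [not_nontrivial_iff_subsingleton] at hR
    exact hμ (isUnit_of_subsingleton _)
  set p : 𝕜[X] := ∑ j ∈ s, C (c j) * X ^ j
  have hp : aeval a p = 0 := by simpa [p, Algebra.smul_def] using h
  simpa [hp, spectrum.zero_eq, p, eval_finsetSum] using
    spectrum.subset_polynomial_aeval a p ⟨μ, hμ, rfl⟩

namespace ContinuousLinearMap

variable {𝕜 E F : Type*} [NontriviallyNormedField 𝕜] [NormedAddCommGroup E] [NormedSpace 𝕜 E]
  [NormedAddCommGroup F] [NormedSpace 𝕜 F]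
  {A : E →L[𝕜] E} {B : F →L[𝕜] F} {T : (F →L[𝕜] E) →L[𝕜] (F →L[𝕜] E)}

theorem pow_apply_smulRight (hT : ∀ U, T U = A ∘L U ∘L B) (f : StrongDual 𝕜 F) (x : E)
    (j : ℕ) : (T ^ j) (f.smulRight x) = (f ∘L B ^ j).smulRight ((A ^ j) x) := by
  induction j with
  | zero => ext; simp
  | succ j ih =>
    rw [pow_succ', mul_apply_eq_comp, ih, hT, pow_succ' A, pow_succ B]
    ext y
    simp

theorem aeval_apply_smulRight_apply (hT : ∀ U, T U = A ∘L U ∘L B) (r : 𝕜[X])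
    (f : StrongDual 𝕜 F) (x : E) (y : F) :
    aeval T r (f.smulRight x) y =
      ∑ j ∈ range (r.natDegree + 1), (r.coeff j * f ((B ^ j) y)) • (A ^ j) x := by
  simp [aeval_eq_sum_range, pow_apply_smulRight hT, mul_smul]

end ContinuousLinearMap

theorem tau_sub_munu_not_nilpotent_general
    {X Y : Type*} [NormedAddCommGroup X] [NormedSpace ℂ X]
    [NormedAddCommGroup Y] [NormedSpace ℂ Y]
    (A : X →L[ℂ] X) (B : Y →L[ℂ] Y) (μ ν : ℂ)
    (hμν : μ * ν ≠ 0) (hσA : spectrum ℂ A = {μ})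
    (T : (Y →L[ℂ] X) →L[ℂ] (Y →L[ℂ] X))
    (hT : ∀ U : Y →L[ℂ] X, T U = A.comp (U.comp B))
    (hn : ¬ IsNilpotent (B - ν • 1)) :
    ¬ IsNilpotent (T - (μ * ν) • 1) := by
  rintro ⟨n, hTn⟩
  have hμ : μ ∈ spectrum ℂ A := by simp [hσA]
  set r : ℂ[X] := (Polynomial.X - Polynomial.C (μ * ν)) ^ n
  have hTr : aeval T r = 0 := by
    simpa only [r, map_pow, map_sub, aeval_X, aeval_C, Algebra.algebraMap_eq_smul_one] using hTn
  have hBr : ∀ (f : StrongDual ℂ Y) (y : Y), f (aeval (μ • B) r y) = 0 := by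
    intro f y
    have hsum := sum_mul_pow_eq_zero_of_mem_spectrum hμ _ (fun j ↦ r.coeff j * f ((B ^ j) y)) <|
      ContinuousLinearMap.ext fun x => by
        simpa [hTr] using (aeval_apply_smulRight_apply hT r f x y).symm
    rw [aeval_eq_sum_range, ← hsum]
    simp only [_root_.smul_pow, _root_.sum_apply, smul_apply, map_sum, map_smul, smul_eq_mul]
    exact sum_congr rfl fun j _ => by ring
  have hμB : aeval (μ • B) r = μ ^ n • (B - ν • 1) ^ n := by
    simp only [r, map_pow, map_sub, aeval_X, aeval_C, Algebra.algebraMap_eq_smul_one, mul_smul,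
      ← smul_sub, _root_.smul_pow]
  refine hn ⟨n, ContinuousLinearMap.ext fun y => ?_⟩
  have hBn_y := SeparatingDual.eq_zero_of_forall_dual_eq_zero (hBr · y)
  rw [hμB, smul_apply, smul_eq_zero] at hBn_y
  exact hBn_y.resolve_left (pow_ne_zero n (left_ne_zero_of_mul hμν))

/-- If `σ(A) = {μ}`, `σ(B) = {ν}`, `μν ≠ 0`, and `B − ν` is quasi-nilpotent but not
nilpotent, then `τ_{AB} − μν` is not nilpotent, where `τ_{AB}(U) = A U B`. -/
theorem tau_sub_munu_not_nilpotent
    {X Y : Type*} [NormedAddCommGroup X] [NormedSpace ℂ X] [CompleteSpace X]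
    [NormedAddCommGroup Y] [NormedSpace ℂ Y] [CompleteSpace Y]
    (A : X →L[ℂ] X) (B : Y →L[ℂ] Y) (μ ν : ℂ)
    (hμν : μ * ν ≠ 0) (hσA : spectrum ℂ A = {μ}) (hσB : spectrum ℂ B = {ν})
    (T : (Y →L[ℂ] X) →L[ℂ] (Y →L[ℂ] X))
    (hT : ∀ U : Y →L[ℂ] X, T U = A.comp (U.comp B))
    (hq : spectrum ℂ (B - ν • 1) = {0}) (hn : ¬ IsNilpotent (B - ν • 1)) :
    ¬ IsNilpotent (T - (μ * ν) • 1) :=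
  tau_sub_munu_not_nilpotent_general A B μ ν hμν hσA T hT hn
end
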